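/- A vector c = (c_1,c_2,c_3,c_4,c_5) ∈ ℤ⁵ with c_5 = 1 and c_1 = 1 is cohomology-free if and only if c is one of the six tuples (1,1,2,1,1), (1,2,2,1,1), (1,2,3,1,1), (1,2,4,2,1), (1,3,4,2,1), (1,3,5,2,1). -/

import Mathlib

/-- The primitive ray generators `l₁,…,l₇` of the fan, in counterclockwise order,
acting on `ℤ²` by the dot product. -/
def rayForm : Fin 7 → ℤ × ℤ :=
  ![(1, -1), (2, -1), (3, -1), (1, 0), (0, 1), (-1, 2), (0, -1)]

/-- Extend `c ∈ ℤ⁵` to seven coefficients by `c₆ = c₇ = 0`. -/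
def cExt (c : Fin 5 → ℤ) : Fin 7 → ℤ :=
  fun i => if h : (i : ℕ) < 5 then c ⟨i, h⟩ else 0

/-- `N_c(m) = {i : l_i(m) + c_i < 0}`. -/
def Nset (c : Fin 5 → ℤ) (m : ℤ × ℤ) : Finset (Fin 7) :=
  Finset.univ.filter fun i =>
    (rayForm i).1 * m.1 + (rayForm i).2 * m.2 + cExt c i < 0

/-- A subset of the cyclic index set `Fin 7` is a circular interval if it is empty
or of the form `{a, a+1, …, b}` with indices taken modulo 7. -/
def IsCircularInterval (S : Finset (Fin 7)) : Prop :=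
  S = ∅ ∨ ∃ (a : Fin 7) (n : ℕ),
    S = (Finset.range (n + 1)).image fun j : ℕ => a + (Fin.ofNat 7 j : Fin 7)

/-- `c ∈ ℤ⁵` is cohomology-free if for every `m ∈ ℤ²` and both `ε ∈ {1, -1}`,
the set `N_{εc}(m)` is a circular interval different from the whole index set. -/
def CohomologyFree (c : Fin 5 → ℤ) : Prop :=
  ∀ m : ℤ × ℤ, ∀ ε : ℤ, ε = 1 ∨ ε = -1 →
    IsCircularInterval (Nset (ε • c) m) ∧ Nset (ε • c) m ≠ Finset.univ


/-!
A proper subset of the cyclic index set is a circular interval exactly when it has at most one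
*exit*, an index `i` in the set with `i + 1` outside it. Write `c = (1, a, b, d, 1)`. Each violation
of one of the inequalities `1 ≤ d ≤ 2`, `2d ≤ b ≤ 2d + 1`, `b ≤ 2a ≤ b + 2` is witnessed by an
explicit `m` (affine in `c`) for which `N_{±c}(m)` has two exits. Conversely, under these
inequalities two exits are ruled out by linear arithmetic, pair by pair, and `N_{±c}(m)` is never
everything because `l₅ + l₇ = 0` and `c₅ = 1` (indices `4` and `6` of `Fin 7`). The inequalities
cut out exactly the six vectors.
-/

open Finset

def exits (S : Finset (Fin 7)) : Finset (Fin 7) := {i | i ∈ S ∧ i + 1 ∉ S}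

def arc (a : Fin 7) (n : ℕ) : Finset (Fin 7) :=
  (range (n + 1)).image fun j : ℕ => a + (Fin.ofNat 7 j : Fin 7)

lemma arc_eq_univ {n : ℕ} (hn : 6 ≤ n) (a : Fin 7) : arc a n = univ := by
  refine eq_univ_of_forall fun i => mem_image.2 ⟨(i - a : Fin 7).val, ?_, ?_⟩
  · have := (i - a).isLt
    simp only [mem_range]
    omega
  · simp

set_option maxRecDepth 10000 in
lemma card_exits_le_one_iff_eq_empty_or_arc : ∀ S : Finset (Fin 7), S ≠ univ →
    (#(exits S) ≤ 1 ↔ S = ∅ ∨ ∃ (a : Fin 7) (n : Fin 6), S = arc a n) := by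
  unfold exits arc
  decide

lemma isCircularInterval_and_ne_univ_iff (S : Finset (Fin 7)) :
    IsCircularInterval S ∧ S ≠ univ ↔ #(exits S) ≤ 1 ∧ S ≠ univ := by
  refine ⟨fun ⟨hS, hne⟩ => ⟨?_, hne⟩, fun ⟨hS, hne⟩ => ⟨?_, hne⟩⟩
  · rw [card_exits_le_one_iff_eq_empty_or_arc S hne]
    rcases hS with h | ⟨a, n, rfl⟩
    · exact .inl h
    · have hn : n < 6 := by
        by_contra! hn
        exact hne (arc_eq_univ hn a)
      exact .inr ⟨a, ⟨n, hn⟩, rfl⟩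
  · rcases (card_exits_le_one_iff_eq_empty_or_arc S hne).1 hS with h | ⟨a, n, rfl⟩
    · exact .inl h
    · exact .inr ⟨a, n, rfl⟩

lemma cohomologyFree_iff_card_exits_le_one (c : Fin 5 → ℤ) :
    CohomologyFree c ↔ ∀ m : ℤ × ℤ, ∀ ε : ℤ, ε = 1 ∨ ε = -1 →
      #(exits (Nset (ε • c) m)) ≤ 1 ∧ Nset (ε • c) m ≠ univ := by
  simp only [CohomologyFree, isCircularInterval_and_ne_univ_iff]

lemma mem_Nset {c : Fin 5 → ℤ} {m : ℤ × ℤ} {i : Fin 7} :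
    i ∈ Nset c m ↔ (rayForm i).1 * m.1 + (rayForm i).2 * m.2 + cExt c i < 0 := by
  simp [Nset]

lemma mem_exits_Nset {c : Fin 5 → ℤ} {m : ℤ × ℤ} {i : Fin 7} :
    i ∈ exits (Nset c m) ↔
      (rayForm i).1 * m.1 + (rayForm i).2 * m.2 + cExt c i < 0 ∧
      0 ≤ (rayForm (i + 1)).1 * m.1 + (rayForm (i + 1)).2 * m.2 + cExt c (i + 1) := by
  simp [exits, mem_Nset]

lemma Nset_ne_univ {c : Fin 5 → ℤ} (hc : -1 ≤ c 4) (m : ℤ × ℤ) : Nset c m ≠ univ := by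
  intro hu
  rw [eq_univ_iff_forall] at hu
  have h4 : m.2 + c 4 < 0 := by simpa [rayForm, cExt] using mem_Nset.1 (hu 4)
  have h6 : 0 < m.2 := by simpa [rayForm, cExt] using mem_Nset.1 (hu 6)
  omega

lemma CohomologyFree.not_two_exits {c : Fin 5 → ℤ} (h : CohomologyFree c) (m : ℤ × ℤ)
    {ε : ℤ} (hε : ε = 1 ∨ ε = -1) {i j : Fin 7} (hij : i ≠ j) :
    ¬ (i ∈ exits (Nset (ε • c) m) ∧ j ∈ exits (Nset (ε • c) m)) := fun ⟨hi, hj⟩ =>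
  hij (card_le_one.1 ((cohomologyFree_iff_card_exits_le_one c).1 h m ε hε).1 i hi j hj)

lemma rayForm_dot_add_cExt_smul (a b d ε x y : ℤ) (i : Fin 7) :
    (rayForm i).1 * x + (rayForm i).2 * y + cExt (ε • ![1, a, b, d, 1]) i =
      ![x - y + ε, 2 * x - y + ε * a, 3 * x - y + ε * b, x + ε * d, y + ε, 2 * y - x, -y] i := by
  fin_cases i <;> simp [rayForm, cExt] <;> ring

section

variable {a b d : ℤ}

lemma CohomologyFree.bounds (h : CohomologyFree ![1, a, b, d, 1]) :
    (1 ≤ d ∧ d ≤ 2) ∧ (2 * d ≤ b ∧ b ≤ 2 * d + 1) ∧ (b ≤ 2 * a ∧ 2 * a ≤ b + 2) := by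
  have hd₁ : 1 ≤ d := by
    have := h.not_two_exits (-1, -1) (ε := 1) (by norm_num) (show (3 : Fin 7) ≠ 5 by decide)
    simp only [mem_exits_Nset, rayForm_dot_add_cExt_smul, Fin.reduceAdd, Matrix.cons_val] at this
    omega
  have hd₂ : d ≤ 2 := by
    have := h.not_two_exits (2, 1) (ε := -1) (by norm_num) (show (3 : Fin 7) ≠ 6 by decide)
    simp only [mem_exits_Nset, rayForm_dot_add_cExt_smul, Fin.reduceAdd, Matrix.cons_val] at this
    omega
  have hb₁ : 2 * d ≤ b := by
    have := h.not_two_exits (-d, -d) (ε := 1) (by norm_num) (show (2 : Fin 7) ≠ 5 by decide)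
    simp only [mem_exits_Nset, rayForm_dot_add_cExt_smul, Fin.reduceAdd, Matrix.cons_val] at this
    omega
  have hb₂ : b ≤ 2 * d + 1 := by
    obtain rfl | rfl : d = 1 ∨ d = 2 := by omega
    · have := h.not_two_exits (1, 0) (ε := -1) (by norm_num) (show (2 : Fin 7) ≠ 5 by decide)
      simp only [mem_exits_Nset, rayForm_dot_add_cExt_smul, Fin.reduceAdd, Matrix.cons_val] at this
      omega
    · have := h.not_two_exits (2, 1) (ε := -1) (by norm_num) (show (2 : Fin 7) ≠ 6 by decide)
      simp only [mem_exits_Nset, rayForm_dot_add_cExt_smul, Fin.reduceAdd, Matrix.cons_val] at this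
      omega
  have ha₁ : b ≤ 2 * a := by
    have := h.not_two_exits (d, 2 * d - a) (ε := -1) (by norm_num) (show (0 : Fin 7) ≠ 2 by decide)
    simp only [mem_exits_Nset, rayForm_dot_add_cExt_smul, Fin.reduceAdd, Matrix.cons_val] at this
    omega
  have ha₂ : 2 * a ≤ b + 2 := by
    have := h.not_two_exits (-d, 2 - d) (ε := 1) (by norm_num) (show (0 : Fin 7) ≠ 2 by decide)
    simp only [mem_exits_Nset, rayForm_dot_add_cExt_smul, Fin.reduceAdd, Matrix.cons_val] at this
    omega
  exact ⟨⟨hd₁, hd₂⟩, ⟨hb₁, hb₂⟩, ⟨ha₁, ha₂⟩⟩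

lemma cohomologyFree_of_bounds (hd : 1 ≤ d ∧ d ≤ 2) (hb : 2 * d ≤ b ∧ b ≤ 2 * d + 1)
    (ha : b ≤ 2 * a ∧ 2 * a ≤ b + 2) : CohomologyFree ![1, a, b, d, 1] := by
  refine (cohomologyFree_iff_card_exits_le_one _).2 fun m ε hε =>
    ⟨card_le_one.2 fun i hi j hj => ?_, Nset_ne_univ (by rcases hε with rfl | rfl <;> simp) m⟩
  simp only [mem_exits_Nset, rayForm_dot_add_cExt_smul] at hi hj
  rcases hε with rfl | rfl <;> fin_cases i <;> fin_cases j <;>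
    simp only [Fin.zero_eta, Fin.mk_one, Fin.reduceFinMk, Fin.reduceAdd, Matrix.cons_val] at hi hj <;>
    first | rfl | omega

lemma cohomologyFree_iff_bounds :
    CohomologyFree ![1, a, b, d, 1] ↔
      (1 ≤ d ∧ d ≤ 2) ∧ (2 * d ≤ b ∧ b ≤ 2 * d + 1) ∧ (b ≤ 2 * a ∧ 2 * a ≤ b + 2) :=
  ⟨CohomologyFree.bounds, fun ⟨hd, hb, ha⟩ => cohomologyFree_of_bounds hd hb ha⟩

end

/-- Classification of cohomology-free vectors with `c₅ = 1` and `c₁ = 1`. -/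
theorem classification_c5_one_c1_one (c : Fin 5 → ℤ) (h5 : c 4 = 1)
    (h1 : c 0 = 1) :
    CohomologyFree c ↔
      c = ![1,1,2,1,1] ∨ c = ![1,2,2,1,1] ∨ c = ![1,2,3,1,1] ∨
      c = ![1,2,4,2,1] ∨ c = ![1,3,4,2,1] ∨ c = ![1,3,5,2,1] := by
  obtain ⟨a, b, d, rfl⟩ : ∃ a b d : ℤ, c = ![1, a, b, d, 1] :=
    ⟨c 1, c 2, c 3, by ext i; fin_cases i <;> simp [h1, h5]⟩
  simp only [cohomologyFree_iff_bounds, Matrix.vecCons_inj, and_true, true_and]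
  omega
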